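/- Assume 0 < σ_ε < σ_T < ∞, α ∈ ℝ, μ_data compactly supported, and e ≡ 0. Then every solution of dx/dt = s_*(x) converges as t → ∞ to the set E = { x ∈ ℝ^d : ∇_x L_{σ_ε}^{σ_T}((d+α)/2 − 1, x) = 0 } of critical points of L. -/

import Mathlib

open MeasureTheory Real Filter

noncomputable def Phi (a b s z : ℝ) : ℝ :=
  ∫ u in (1 / b ^ 2)..(1 / a ^ 2), u ^ (s - 1) * Real.exp (-z * u)

noncomputable def Lab (d : ℕ) (μ : Measure (EuclideanSpace ℝ (Fin d)))
    (a b s : ℝ) (x : EuclideanSpace ℝ (Fin d)) : ℝ :=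
  ∫ xt, Phi a b s (‖x - xt‖ ^ 2 / 2) ∂μ

noncomputable def sStar (d : ℕ) (μ : Measure (EuclideanSpace ℝ (Fin d)))
    (σε σT α : ℝ) (x : EuclideanSpace ℝ (Fin d)) : EuclideanSpace ℝ (Fin d) :=
  (∫ xt, Phi σε σT (((d : ℝ) + 2 * α - 2) / 2) (‖x - xt‖ ^ 2 / 2) ∂μ)⁻¹ •
    ∫ xt, Phi σε σT (((d : ℝ) + α) / 2) (‖x - xt‖ ^ 2 / 2) • (xt - x) ∂μ

/-!
`L := L_{σε}^{σT}((d + α)/2 - 1, ·)` is a Lyapunov function for the flow. Differentiating under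
the integral (`∂_z Φ(s, z) = -Φ(s + 1, z)`) gives `∇L(x) = ∫ Φ((d + α)/2, |x - x̃|²/2) (x̃ - x) dμ`,
so `s_* = ∇L / L̃` and `L` increases along a trajectory at rate `|∇L|² / L̃ ≥ 0`. Since `μ` has
compact support, `L(x) → 0` as `|x| → ∞`, so the superlevel set `{L ≥ L(x(0))}` is compact and
contains the forward orbit. There the speed is bounded, so a trajectory that is `ε`-far from the
critical set at time `t` stays `ε/2`-far on `[t, t + τ]`, where `|∇L|² / L̃ ≥ δ > 0`. If this
happened at arbitrarily large times, `L(x(t))` would gain `δτ` on intervals of fixed length,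
contradicting the convergence of this bounded monotone function.
-/

open Set InnerProductSpace

section Phi

variable {a b : ℝ}

lemma uIcc_one_div_sq_subset_Ioi (ha : 0 < a) (hab : a < b) :
    uIcc (1 / b ^ 2) (1 / a ^ 2) ⊆ Ioi 0 := by
  have hb : 0 < b := ha.trans hab
  exact fun u hu => (lt_min (by positivity) (by positivity)).trans_le hu.1

lemma continuousOn_Phi_integrand (s z : ℝ) :
    ContinuousOn (fun u : ℝ => u ^ (s - 1) * exp (-z * u)) (Ioi 0) := fun u hu =>
  ((continuousAt_rpow_const u (s - 1) (Or.inl (ne_of_gt hu))).mul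
    (by fun_prop : Continuous fun u : ℝ => exp (-z * u)).continuousAt).continuousWithinAt

lemma intervalIntegrable_Phi_integrand (ha : 0 < a) (hab : a < b) (s z : ℝ) :
    IntervalIntegrable (fun u : ℝ => u ^ (s - 1) * exp (-z * u)) volume
      (1 / b ^ 2) (1 / a ^ 2) :=
  ((continuousOn_Phi_integrand s z).mono (uIcc_one_div_sq_subset_Ioi ha hab)).intervalIntegrable

lemma Phi_pos (ha : 0 < a) (hab : a < b) (s z : ℝ) : 0 < Phi a b s z :=
  intervalIntegral.intervalIntegral_pos_of_pos_on (intervalIntegrable_Phi_integrand ha hab s z)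
    (fun u hu =>
      have : 0 < u :=
        uIcc_one_div_sq_subset_Ioi ha hab (Icc_subset_uIcc (Ioo_subset_Icc_self hu))
      by positivity)
    (by gcongr)

lemma hasDerivAt_Phi_integrand {u : ℝ} (hu : 0 < u) (s z : ℝ) :
    HasDerivAt (fun z => u ^ (s - 1) * exp (-z * u)) (-(u ^ s * exp (-z * u))) z := by
  have h : HasDerivAt (fun z : ℝ => -z * u) (-u) z := by
    simpa using (hasDerivAt_neg z).mul_const u
  refine (h.exp.const_mul (u ^ (s - 1))).congr_deriv ?_
  rw [show u ^ s = u ^ (s - 1) * u by rw [← rpow_add_one hu.ne']; ring_nf]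
  ring

theorem hasDerivAt_Phi (ha : 0 < a) (hab : a < b) (s z : ℝ) :
    HasDerivAt (Phi a b s) (-Phi a b (s + 1) z) z := by
  have hIoc : uIoc (1 / b ^ 2) (1 / a ^ 2) ⊆ Ioi 0 :=
    uIoc_subset_uIcc.trans (uIcc_one_div_sq_subset_Ioi ha hab)
  have hmeas : ∀ r w : ℝ, AEStronglyMeasurable (fun u : ℝ => u ^ (r - 1) * exp (-w * u))
      (volume.restrict (uIoc (1 / b ^ 2) (1 / a ^ 2))) := fun r w =>
    ((continuousOn_Phi_integrand r w).mono hIoc).aestronglyMeasurable measurableSet_uIoc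
  -- on `ball z 1` the parameter exceeds `z - 1`, so `u ^ s * exp (-(z - 1) * u)` dominates
  have key := intervalIntegral.hasDerivAt_integral_of_dominated_loc_of_deriv_le
    (F' := fun w u => -(u ^ (s + 1 - 1) * exp (-w * u)))
    (bound := fun u => u ^ (s + 1 - 1) * exp (-(z - 1) * u)) (Metric.ball_mem_nhds z one_pos)
    (Eventually.of_forall (hmeas s)) (intervalIntegrable_Phi_integrand ha hab s z)
    (hmeas (s + 1) z).neg ?_ (intervalIntegrable_Phi_integrand ha hab (s + 1) (z - 1)) ?_
  · rw [intervalIntegral.integral_neg] at key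
    exact key.2
  · refine ae_of_all _ fun u hu w hw => ?_
    have hu0 : 0 < u := hIoc hu
    have hw : z - 1 < w := by linarith [abs_lt.1 (Metric.mem_ball.1 hw)]
    rw [norm_neg, Real.norm_of_nonneg (by positivity)]
    gcongr
  · refine ae_of_all _ fun u hu w _ => ?_
    simpa only [add_sub_cancel_right] using hasDerivAt_Phi_integrand (hIoc hu) s w

lemma continuous_Phi (ha : 0 < a) (hab : a < b) (s : ℝ) : Continuous (Phi a b s) :=
  continuous_iff_continuousAt.2 fun z => (hasDerivAt_Phi ha hab s z).continuousAt

lemma antitone_Phi (ha : 0 < a) (hab : a < b) (s : ℝ) : Antitone (Phi a b s) :=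
  antitone_of_hasDerivAt_nonpos (hasDerivAt_Phi ha hab s) fun z =>
    neg_nonpos.2 (Phi_pos ha hab (s + 1) z).le

lemma Phi_le_exp_mul_Phi_zero (ha : 0 < a) (hab : a < b) (s : ℝ) {z : ℝ} (hz : 0 ≤ z) :
    Phi a b s z ≤ exp (-(1 / b ^ 2) * z) * Phi a b s 0 := by
  rw [Phi, Phi, ← intervalIntegral.integral_const_mul]
  refine intervalIntegral.integral_mono_on (by gcongr)
    (intervalIntegrable_Phi_integrand ha hab s z)
    ((intervalIntegrable_Phi_integrand ha hab s 0).const_mul _) fun u hu => ?_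
  have hu0 : 0 < u := uIcc_one_div_sq_subset_Ioi ha hab (Icc_subset_uIcc hu)
  rw [mul_left_comm, neg_zero, zero_mul, exp_zero, mul_one]
  exact mul_le_mul_of_nonneg_left (exp_le_exp.2 (by nlinarith [hu.1])) (by positivity)

lemma tendsto_Phi_atTop (ha : 0 < a) (hab : a < b) (s : ℝ) :
    Tendsto (Phi a b s) atTop (nhds 0) := by
  have hb : 0 < b := ha.trans hab
  have hexp : Tendsto (fun z => exp (-(1 / b ^ 2) * z) * Phi a b s 0) atTop (nhds 0) := by
    simpa using (tendsto_exp_atBot.comp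
      (tendsto_id.const_mul_atTop_of_neg (neg_neg_of_pos (by positivity)))).mul_const (Phi a b s 0)
  exact tendsto_of_tendsto_of_tendsto_of_le_of_le' tendsto_const_nhds hexp
    (Eventually.of_forall fun z => (Phi_pos ha hab s z).le)
    ((eventually_ge_atTop 0).mono fun z hz => Phi_le_exp_mul_Phi_zero ha hab s hz)

lemma Phi_half_sq_le_Phi_zero (ha : 0 < a) (hab : a < b) (s r : ℝ) :
    Phi a b s (r ^ 2 / 2) ≤ Phi a b s 0 :=
  antitone_Phi ha hab s (by positivity)

end Phi

section Kernel

variable {F : Type*} [NormedAddCommGroup F] [InnerProductSpace ℝ F] {a b : ℝ}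

lemma norm_Phi_smul_sub_le (ha : 0 < a) (hab : a < b) (s : ℝ) {R r : ℝ} {y w : F}
    (hy : ‖y‖ ≤ R) (hw : ‖w‖ ≤ r) :
    ‖Phi a b s (‖w - y‖ ^ 2 / 2) • (y - w)‖ ≤ Phi a b s 0 * (R + r) := by
  rw [norm_smul, Real.norm_of_nonneg (Phi_pos ha hab s _).le]
  exact mul_le_mul (Phi_half_sq_le_Phi_zero ha hab s _)
    ((norm_sub_le y w).trans (add_le_add hy hw)) (norm_nonneg _) (Phi_pos ha hab s 0).le

lemma hasFDerivAt_Phi_half_dist_sq [CompleteSpace F] (ha : 0 < a) (hab : a < b) (s : ℝ)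
    (y w : F) :
    HasFDerivAt (fun x : F => Phi a b s (‖x - y‖ ^ 2 / 2))
      (toDual ℝ F (Phi a b (s + 1) (‖w - y‖ ^ 2 / 2) • (y - w))) w := by
  have hsq : HasFDerivAt (fun x : F => ‖x - y‖ ^ 2) _ w :=
    ((hasFDerivAt_id w).sub_const y).norm_sq
  have hhalf (r : ℝ) : HasDerivAt (fun r => Phi a b s (r / 2)) _ r :=
    (hasDerivAt_Phi ha hab s _).comp r ((hasDerivAt_id r).div_const 2)
  have h := (hhalf _).comp_hasFDerivAt w hsq
  refine h.congr_fderiv (ContinuousLinearMap.ext fun v => ?_)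
  simp only [one_div, neg_mul, id_eq, map_sub, ContinuousLinearMap.comp_id, neg_smul, neg_apply,
    smul_apply, sub_apply, coe_innerSL_apply, nsmul_eq_mul, Nat.cast_ofNat, smul_eq_mul, map_smul,
    toDual_apply_apply]
  ring

end Kernel

section Lab

variable {d : ℕ} {μ : Measure (EuclideanSpace ℝ (Fin d))} [IsFiniteMeasure μ] {a b R : ℝ}

local notation "ℝᵈ" => EuclideanSpace ℝ (Fin d)

lemma integrable_Phi_half_dist_sq (ha : 0 < a) (hab : a < b) (s : ℝ) (x : ℝᵈ) :
    Integrable (fun y => Phi a b s (‖x - y‖ ^ 2 / 2)) μ :=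
  (integrable_const (Phi a b s 0)).mono'
    ((continuous_Phi ha hab s).comp (by fun_prop)).aestronglyMeasurable
    (ae_of_all _ fun y => by
      rw [Real.norm_of_nonneg (Phi_pos ha hab s _).le]; exact Phi_half_sq_le_Phi_zero ha hab s _)

lemma Lab_pos [NeZero μ] (ha : 0 < a) (hab : a < b) (s : ℝ) (x : ℝᵈ) :
    0 < Lab d μ a b s x := by
  have hsupp : Function.support (fun y => Phi a b s (‖x - y‖ ^ 2 / 2)) = univ :=
    Function.support_eq_univ fun y => (Phi_pos ha hab s _).ne'
  rw [Lab, integral_pos_iff_support_of_nonneg (fun y => (Phi_pos ha hab s _).le)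
    (integrable_Phi_half_dist_sq ha hab s x), hsupp]
  exact Measure.measure_univ_pos.2 (NeZero.ne μ)

theorem hasGradientAt_Lab (ha : 0 < a) (hab : a < b)
    (hR : ∀ᵐ y ∂μ, ‖y‖ ≤ R) (s : ℝ) (x : ℝᵈ) :
    HasGradientAt (Lab d μ a b s) (∫ y, Phi a b (s + 1) (‖x - y‖ ^ 2 / 2) • (y - x) ∂μ) x := by
  have hcomm : ∫ y, toDual ℝ ℝᵈ (Phi a b (s + 1) (‖x - y‖ ^ 2 / 2) • (y - x)) ∂μ =
      toDual ℝ ℝᵈ (∫ y, Phi a b (s + 1) (‖x - y‖ ^ 2 / 2) • (y - x) ∂μ) :=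
    (toDual ℝ ℝᵈ).toContinuousLinearEquiv.integral_comp_comm _
  rw [hasGradientAt_iff_hasFDerivAt, ← hcomm]
  refine hasFDerivAt_integral_of_dominated_of_fderiv_le (Metric.ball_mem_nhds x one_pos)
    (bound := fun _ => Phi a b (s + 1) 0 * (R + (‖x‖ + 1)))
    (Eventually.of_forall fun w =>
      ((continuous_Phi ha hab s).comp (by fun_prop)).aestronglyMeasurable)
    (integrable_Phi_half_dist_sq ha hab s x) ?_ ?_ (integrable_const _)
    (ae_of_all _ fun y w _ => hasFDerivAt_Phi_half_dist_sq ha hab s y w)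
  · have := continuous_Phi ha hab (s + 1)
    exact (by fun_prop : Continuous fun y =>
      toDual ℝ ℝᵈ (Phi a b (s + 1) (‖x - y‖ ^ 2 / 2) • (y - x))).aestronglyMeasurable
  · filter_upwards [hR] with y hy w hw
    rw [LinearIsometryEquiv.norm_map]
    exact norm_Phi_smul_sub_le ha hab (s + 1) hy (norm_lt_of_mem_ball hw).le

lemma continuous_Lab (ha : 0 < a) (hab : a < b) (hR : ∀ᵐ y ∂μ, ‖y‖ ≤ R) (s : ℝ) :
    Continuous (Lab d μ a b s) :=
  continuous_iff_continuousAt.2 fun x =>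
    (hasGradientAt_Lab ha hab hR s x).differentiableAt.continuousAt

lemma gradient_Lab (ha : 0 < a) (hab : a < b) (hR : ∀ᵐ y ∂μ, ‖y‖ ≤ R)
    (s : ℝ) : gradient (Lab d μ a b s) =
      fun x => ∫ y, Phi a b (s + 1) (‖x - y‖ ^ 2 / 2) • (y - x) ∂μ :=
  gradient_eq (hasGradientAt_Lab ha hab hR s)

lemma continuous_gradient_Lab (ha : 0 < a) (hab : a < b)
    (hR : ∀ᵐ y ∂μ, ‖y‖ ≤ R) (s : ℝ) : Continuous (gradient (Lab d μ a b s)) := by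
  have hΦ := continuous_Phi ha hab (s + 1)
  rw [gradient_Lab ha hab hR]
  refine continuous_iff_continuousAt.2 fun x => continuousAt_of_dominated
    (bound := fun _ => Phi a b (s + 1) 0 * (R + (‖x‖ + 1)))
    (Eventually.of_forall fun w => ?_) ?_ (integrable_const _) (ae_of_all _ fun y => ?_)
  · exact (by fun_prop : Continuous fun y =>
      Phi a b (s + 1) (‖w - y‖ ^ 2 / 2) • (y - w)).aestronglyMeasurable
  · filter_upwards [Metric.ball_mem_nhds x one_pos] with w hw
    filter_upwards [hR] with y hy
    exact norm_Phi_smul_sub_le ha hab (s + 1) hy (norm_lt_of_mem_ball hw).le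
  · exact (by fun_prop : Continuous fun w : ℝᵈ =>
      Phi a b (s + 1) (‖w - y‖ ^ 2 / 2) • (y - w)).continuousAt

lemma tendsto_Lab_cocompact (ha : 0 < a) (hab : a < b)
    (hR : ∀ᵐ y ∂μ, ‖y‖ ≤ R) (s : ℝ) :
    Tendsto (Lab d μ a b s) (cocompact ℝᵈ) (nhds 0) := by
  have hfar : ∀ x : ℝᵈ, R ≤ ‖x‖ →
      Lab d μ a b s x ≤ μ.real univ * Phi a b s ((‖x‖ - R) ^ 2 / 2) := by
    intro x hx
    rw [← smul_eq_mul, ← integral_const]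
    refine integral_mono_ae (integrable_Phi_half_dist_sq ha hab s x) (integrable_const _) ?_
    filter_upwards [hR] with y hy
    refine antitone_Phi ha hab s ?_
    have : ‖x‖ - R ≤ ‖x - y‖ := by linarith [norm_sub_norm_le x y]
    gcongr
  have hbound : Tendsto (fun x : ℝᵈ => μ.real univ * Phi a b s ((‖x‖ - R) ^ 2 / 2))
      (cocompact ℝᵈ) (nhds 0) := by
    have hsq : Tendsto (fun r : ℝ => (r - R) ^ 2 / 2) atTop atTop :=
      ((tendsto_pow_atTop two_ne_zero).comp
        (tendsto_atTop_add_const_right _ (-R) tendsto_id)).atTop_div_const two_pos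
    simpa using ((tendsto_Phi_atTop ha hab s).comp
      (hsq.comp tendsto_norm_cocompact_atTop)).const_mul (μ.real univ)
  exact tendsto_of_tendsto_of_tendsto_of_le_of_le' tendsto_const_nhds hbound
    (Eventually.of_forall fun x => integral_nonneg fun y => (Phi_pos ha hab s _).le)
    ((tendsto_norm_cocompact_atTop.eventually_ge_atTop R).mono hfar)

end Lab

lemma isCompact_setOf_le_of_tendsto_cocompact {X : Type*} [TopologicalSpace X] {f : X → ℝ}
    (hf : Continuous f) (h : Tendsto f (cocompact X) (nhds 0)) {c : ℝ} (hc : 0 < c) :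
    IsCompact {x | c ≤ f x} := by
  obtain ⟨K, hK, hsub⟩ := mem_cocompact'.1 (h (Iio_mem_nhds hc))
  exact hK.of_isClosed_subset (isClosed_le continuous_const hf) fun x hx =>
    hsub (not_lt.2 (show c ≤ f x from hx))

section LaSalle

open Metric

lemma exists_tendsto_atTop_of_monotoneOn_Ici {f : ℝ → ℝ} (hf : MonotoneOn f (Ici 0))
    (hbdd : BddAbove (f '' Ici 0)) : ∃ ℓ, Tendsto f atTop (nhds ℓ) := by
  have hmono : Monotone fun t => f (max t 0) := fun s t hst =>
    hf (le_max_right s 0) (le_max_right t 0) (max_le_max_right 0 hst)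
  have hbdd' : BddAbove (range fun t => f (max t 0)) :=
    hbdd.mono (range_subset_iff.2 fun t => mem_image_of_mem f (le_max_right t 0))
  refine ⟨_, (tendsto_atTop_ciSup hmono hbdd').congr' ?_⟩
  filter_upwards [eventually_ge_atTop 0] with t ht
  rw [max_eq_left ht]

lemma exists_pos_le_of_le_infDist {X : Type*} [PseudoMetricSpace X] {g : X → ℝ} {S : Set X}
    (hS : IsCompact S) (hg : ContinuousOn g S) (hg_nonneg : ∀ w ∈ S, 0 ≤ g w) {r : ℝ}
    (hr : 0 < r) : ∃ δ > 0, ∀ w ∈ S, r ≤ infDist w {w | g w = 0} → δ ≤ g w := by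
  have hSr : IsCompact (S ∩ {w | r ≤ infDist w {w | g w = 0}}) :=
    hS.inter_right (isClosed_le continuous_const (continuous_infDist_pt _))
  obtain ⟨δ, hδ, hle⟩ := hSr.exists_forall_le' (hg.mono inter_subset_left) (a := 0)
    fun w ⟨hwS, hwr⟩ => (hg_nonneg w hwS).lt_of_ne' fun h0 =>
      (hr.trans_le hwr).ne' (infDist_zero_of_mem h0)
  exact ⟨δ, hδ, fun w hwS hwr => hle w ⟨hwS, hwr⟩⟩

variable {E : Type*} [NormedAddCommGroup E] [NormedSpace ℝ E]

lemma le_infDist_of_norm_deriv_le {x x' : ℝ → E} {Z : Set E} {M ε t : ℝ} (hM : 0 < M)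
    (hx : ∀ u, HasDerivAt x (x' u) u) (hbound : ∀ u ∈ Icc t (t + ε / (2 * M)), ‖x' u‖ ≤ M)
    (hfar : ε ≤ infDist (x t) Z) : ∀ u ∈ Icc t (t + ε / (2 * M)), ε / 2 ≤ infDist (x u) Z := by
  intro u hu
  have hlip : ‖x u - x t‖ ≤ M * (u - t) :=
    norm_image_sub_le_of_norm_deriv_le_segment' (fun v _ => (hx v).hasDerivWithinAt)
      (fun v hv => hbound v (Ico_subset_Icc_self hv)) u hu
  have hMτ : M * (u - t) ≤ ε / 2 := by
    calc M * (u - t) ≤ M * (ε / (2 * M)) := by gcongr; linarith [hu.2]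
      _ = ε / 2 := by field_simp
  linarith [infDist_le_infDist_add_dist (x := x t) (y := x u) (s := Z), dist_eq_norm (x t) (x u),
    norm_sub_rev (x u) (x t)]

theorem tendsto_infDist_setOf_eq_zero_of_lyapunov {f : E → E} {V g : E → ℝ} {K : Set E}
    {x : ℝ → E} (hK : IsCompact K) (hf : ContinuousOn f K) (hV : ContinuousOn V K)
    (hg : ContinuousOn g K) (hg_nonneg : ∀ w ∈ K, 0 ≤ g w) (hxK : ∀ t, 0 ≤ t → x t ∈ K)
    (hx : ∀ t, HasDerivAt x (f (x t)) t)
    (hVx : ∀ t, HasDerivAt (fun t => V (x t)) (g (x t)) t) :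
    Tendsto (fun t => infDist (x t) {w | g w = 0}) atTop (nhds 0) := by
  set Z := {w | g w = 0}
  obtain ⟨M, hM0, hM⟩ : ∃ M, 0 < M ∧ ∀ w ∈ K, ‖f w‖ ≤ M := by
    obtain ⟨M, hM⟩ := hK.exists_bound_of_continuousOn hf
    exact ⟨max M 1, by positivity, fun w hw => (hM w hw).trans (le_max_left _ _)⟩
  have hVmono : MonotoneOn (fun t => V (x t)) (Ici 0) :=
    monotoneOn_of_hasDerivWithinAt_nonneg (convex_Ici 0)
      (fun t _ => (hVx t).continuousAt.continuousWithinAt) (fun t _ => (hVx t).hasDerivWithinAt)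
      fun t ht => hg_nonneg _ (hxK t (interior_subset ht))
  obtain ⟨ℓ, hℓ⟩ := exists_tendsto_atTop_of_monotoneOn_Ici hVmono
    ((hK.bddAbove_image hV).mono (by
      rintro _ ⟨t, ht, rfl⟩
      exact mem_image_of_mem V (hxK t ht)))
  refine tendsto_order.2 ⟨fun ε hε => Eventually.of_forall fun t => hε.trans_le infDist_nonneg,
    fun ε hε => ?_⟩
  by_contra hfreq
  simp only [not_eventually, not_lt] at hfreq
  set τ := ε / (2 * M)
  have hτ : 0 < τ := by positivity
  obtain ⟨δ, hδ, hgδ⟩ := exists_pos_le_of_le_infDist hK hg hg_nonneg (half_pos hε)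
  -- while the orbit stays `ε / 2` away from `Z`, `V` increases at rate at least `δ`
  have hgain : ∀ t, 0 ≤ t → ε ≤ infDist (x t) Z → δ * τ ≤ V (x (t + τ)) - V (x t) := by
    intro t ht hfar
    have hnear := le_infDist_of_norm_deriv_le hM0 hx
      (fun u hu => hM _ (hxK u (ht.trans hu.1))) hfar
    have h := (convex_Icc t (t + τ)).mul_sub_le_image_sub_of_le_deriv
      (fun u _ => (hVx u).continuousAt.continuousWithinAt)
      (fun u _ => (hVx u).differentiableAt.differentiableWithinAt)
      (fun u hu => by
        rw [(hVx u).deriv]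
        exact hgδ _ (hxK u (ht.trans (interior_subset hu).1)) (hnear u (interior_subset hu)))
      t (left_mem_Icc.2 (by linarith)) (t + τ) (right_mem_Icc.2 (by linarith)) (by linarith)
    simpa using h
  have hsmall : ∀ᶠ t in atTop, V (x (t + τ)) - V (x t) < δ * τ := by
    have h := (hℓ.comp (tendsto_atTop_add_const_right _ τ tendsto_id)).sub hℓ
    rw [sub_self] at h
    exact h.eventually (gt_mem_nhds (mul_pos hδ hτ))
  obtain ⟨t, hfar, hsm, ht0⟩ :=
    (hfreq.and_eventually (hsmall.and (eventually_ge_atTop 0))).exists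
  exact hsm.not_ge (hgain t ht0 hfar)

end LaSalle

lemma HasGradientAt.hasDerivAt_comp {F : Type*} [NormedAddCommGroup F] [InnerProductSpace ℝ F]
    [CompleteSpace F] {V : F → ℝ} {v x' : F} {x : ℝ → F} {t : ℝ} (hV : HasGradientAt V v (x t))
    (hx : HasDerivAt x x' t) : HasDerivAt (fun t => V (x t)) (inner ℝ v x') t :=
  (hasGradientAt_iff_hasFDerivAt.1 hV).comp_hasDerivAt t hx

section Flow

variable {d : ℕ} {μ : Measure (EuclideanSpace ℝ (Fin d))} [IsFiniteMeasure μ] {σε σT R : ℝ}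

local notation "ℝᵈ" => EuclideanSpace ℝ (Fin d)

lemma sStar_eq_smul_gradient (hσε : 0 < σε) (hσ : σε < σT) (hR : ∀ᵐ y ∂μ, ‖y‖ ≤ R) (α : ℝ) :
    sStar d μ σε σT α = fun x => (Lab d μ σε σT (((d : ℝ) + 2 * α - 2) / 2) x)⁻¹ •
      gradient (Lab d μ σε σT (((d : ℝ) + α) / 2 - 1)) x := by
  rw [gradient_Lab hσε hσ hR, sub_add_cancel]
  rfl

lemma continuous_sStar [NeZero μ] (hσε : 0 < σε) (hσ : σε < σT) (hR : ∀ᵐ y ∂μ, ‖y‖ ≤ R)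
    (α : ℝ) : Continuous (sStar d μ σε σT α) := by
  rw [sStar_eq_smul_gradient hσε hσ hR]
  exact ((continuous_Lab hσε hσ hR _).inv₀ fun w => (Lab_pos hσε hσ _ w).ne').smul
    (continuous_gradient_Lab hσε hσ hR _)

lemma hasDerivAt_Lab_comp_of_hasDerivAt_sStar (hσε : 0 < σε) (hσ : σε < σT)
    (hR : ∀ᵐ y ∂μ, ‖y‖ ≤ R) {α t : ℝ} {x : ℝ → ℝᵈ}
    (hx : HasDerivAt x (sStar d μ σε σT α (x t)) t) :
    HasDerivAt (fun t => Lab d μ σε σT (((d : ℝ) + α) / 2 - 1) (x t))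
      ((Lab d μ σε σT (((d : ℝ) + 2 * α - 2) / 2) (x t))⁻¹ *
        ‖gradient (Lab d μ σε σT (((d : ℝ) + α) / 2 - 1)) (x t)‖ ^ 2) t := by
  have hV := (hasGradientAt_Lab hσε hσ hR (((d : ℝ) + α) / 2 - 1) (x t)).differentiableAt
  rw [sStar_eq_smul_gradient hσε hσ hR] at hx
  simpa only [real_inner_smul_right, real_inner_self_eq_norm_sq] using
    hV.hasGradientAt.hasDerivAt_comp hx

end Flow

/-- LaSalle-type convergence: when `e ≡ 0`, every solution of `dx/dt = s_*(x)` converges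
as `t → ∞` to the critical set `E = {x : ∇ L_{σε}^{σT}((d+α)/2-1, x) = 0}`. -/
theorem lasalle_convergence (d : ℕ) (σε σT α : ℝ) (hσε : 0 < σε) (hσ : σε < σT)
    (μ : Measure (EuclideanSpace ℝ (Fin d))) [IsProbabilityMeasure μ]
    (hμ : ∃ K : Set (EuclideanSpace ℝ (Fin d)), IsCompact K ∧ μ Kᶜ = 0)
    (x : ℝ → EuclideanSpace ℝ (Fin d))
    (hx : ∀ t : ℝ, HasDerivAt x (sStar d μ σε σT α (x t)) t) :
    Tendsto (fun t : ℝ => Metric.infDist (x t)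
        {y : EuclideanSpace ℝ (Fin d) |
          gradient (Lab d μ σε σT (((d : ℝ) + α) / 2 - 1)) y = 0})
      atTop (nhds 0) := by
  obtain ⟨K, hK, hμK⟩ := hμ
  obtain ⟨R, hR⟩ := hK.isBounded.exists_norm_le
  have hR : ∀ᵐ y ∂μ, ‖y‖ ≤ R := eventually_of_mem (mem_ae_iff.2 hμK) hR
  set V := Lab d μ σε σT (((d : ℝ) + α) / 2 - 1)
  set W := Lab d μ σε σT (((d : ℝ) + 2 * α - 2) / 2)
  have hW : ∀ w, 0 < W w := Lab_pos hσε hσ _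
  set g := fun w => (W w)⁻¹ * ‖gradient V w‖ ^ 2
  have hg_nonneg : ∀ w, 0 ≤ g w := fun w => by have := hW w; positivity
  have hVx : ∀ t, HasDerivAt (fun t => V (x t)) (g (x t)) t := fun t =>
    hasDerivAt_Lab_comp_of_hasDerivAt_sStar hσε hσ hR (hx t)
  have hcrit : {w | g w = 0} = {w | gradient V w = 0} := by
    ext w
    simp [g, (hW w).ne']
  rw [← hcrit]
  exact tendsto_infDist_setOf_eq_zero_of_lyapunov (K := {w | V (x 0) ≤ V w})
    (isCompact_setOf_le_of_tendsto_cocompact (continuous_Lab hσε hσ hR _)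
      (tendsto_Lab_cocompact hσε hσ hR _) (Lab_pos hσε hσ _ _))
    (continuous_sStar hσε hσ hR α).continuousOn (continuous_Lab hσε hσ hR _).continuousOn
    (((continuous_Lab hσε hσ hR _).inv₀ fun w => (hW w).ne').mul
      ((continuous_gradient_Lab hσε hσ hR _).norm.pow 2)).continuousOn
    (fun w _ => hg_nonneg w)
    (fun t ht => monotone_of_hasDerivAt_nonneg hVx (fun t => hg_nonneg _) ht) hx hVx
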